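/- arXiv:1807.03189 — 6 statements merged into one kernel-verified Lean document; each statement's English description precedes it below -/
import Mathlib

section
/- Let $1 \le r \le s$ be integers and let $\mu_1, \dots, \mu_s$ be elements of a commutative ring (e.g. real numbers or indeterminates). Then $\sum_{i=s-r}^{s} (-1)^i \binom{i}{s-r} \sum_{1 \le j_1 < \cdots < j_i \le s} \left( \sum_{e=1}^{i} \mu_{j_e} \right)^r = (-1)^s \, r! \cdot e_r(\mu_1, \dots, \mu_s)$, where $e_r$ denotes the $r$-th elementary symmetric polynomial $e_r(\mu_1,\dots,\mu_s) = \sum_{1 \le j_1 < \cdots < j_r \le s} \mu_{j_1}\cdots\mu_{j_r}$. -/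
/-!
Write `binom(|J|, s - r)` as the number of `(s - r)`-subsets `K ⊆ J` and sum over `K` first. For
fixed `K`, the sum over `J ⊇ K` is, up to sign, the `r`-fold iterated finite difference of
`x ↦ x ^ r` with steps `μ j` (`j ∉ K`) taken at `∑_{j ∈ K} μ j`. Each difference lowers the degree
by one and multiplies the leading coefficient by step times degree, so the result is
`(-1) ^ s * r! * ∏_{j ∉ K} μ j`; summing over the complements `U \ K` gives `e_r`.
-/

open Finset

section AddCommMonoid

variable {α M : Type*} [DecidableEq α] [AddCommMonoid M]

lemma sum_powersetCard_sdiff (U : Finset α) {r : ℕ} (hr : r ≤ #U) (f : Finset α → M) :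
    ∑ K ∈ powersetCard (#U - r) U, f (U \ K) = ∑ J ∈ powersetCard r U, f J := by
  refine sum_nbij' (U \ ·) (U \ ·) (fun K hK => ?_) (fun J hJ => ?_)
    (fun K hK => Finset.sdiff_sdiff_eq_self (mem_powersetCard.mp hK).1)
    (fun J hJ => Finset.sdiff_sdiff_eq_self (mem_powersetCard.mp hJ).1) (fun _ _ => rfl)
  · obtain ⟨hKU, hK⟩ := mem_powersetCard.mp hK
    rw [mem_powersetCard]
    exact ⟨sdiff_subset, by rw [card_sdiff_of_subset hKU, hK, Nat.sub_sub_self hr]⟩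
  · obtain ⟨hJU, hJ⟩ := mem_powersetCard.mp hJ
    rw [mem_powersetCard]
    exact ⟨sdiff_subset, by rw [card_sdiff_of_subset hJU, hJ]⟩

lemma sum_Icc_choose_smul_sum_powersetCard (U : Finset α) (m : ℕ) (f : Finset α → M) :
    ∑ i ∈ Icc m #U, i.choose m • ∑ J ∈ powersetCard i U, f J
      = ∑ K ∈ powersetCard m U, ∑ J ∈ Icc K U, f J := by
  calc ∑ i ∈ Icc m #U, i.choose m • ∑ J ∈ powersetCard i U, f J
      = ∑ J ∈ U.powerset, (#J).choose m • f J := by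
        rw [sum_powerset]
        refine sum_subset (fun i hi => ?_) (fun i _ hi => ?_) |>.trans
          (sum_congr rfl fun i _ => ?_)
        · simp only [mem_Icc, mem_range] at hi ⊢; omega
        · simp only [mem_Icc, mem_range, not_and, not_le] at *
          rw [Nat.choose_eq_zero_of_lt (by omega), zero_smul]
        · rw [smul_sum]
          exact sum_congr rfl fun J hJ => by rw [(mem_powersetCard.mp hJ).2]
    _ = ∑ J ∈ U.powerset, ∑ K ∈ powersetCard m J, f J := by
        simp only [sum_const, card_powersetCard]
    _ = ∑ K ∈ powersetCard m U, ∑ J ∈ Icc K U, f J :=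
        sum_comm' fun J K => by
          simp only [mem_powersetCard, mem_powerset, mem_Icc]
          constructor
          · rintro ⟨hJU, hKJ, hK⟩; exact ⟨⟨hKJ, hJU⟩, hKJ.trans hJU, hK⟩
          · rintro ⟨⟨hKJ, hJU⟩, -, hK⟩; exact ⟨hJU, hKJ, hK⟩

end AddCommMonoid

section CommRing

variable {α R : Type*} [DecidableEq α] [CommRing R]

/-- `(-1) ^ #S` times the iterated finite difference `Δ_{μ a₁} ⋯ Δ_{μ aₖ} (x ↦ x ^ n)` at `c`,
where `S = {a₁, …, aₖ}`. -/
def altPowSum (S : Finset α) (μ : α → R) (c : R) (n : ℕ) : R :=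
  ∑ T ∈ S.powerset, (-1) ^ #T * (c + ∑ j ∈ T, μ j) ^ n

lemma add_pow_sub_pow (x y : R) (n : ℕ) :
    (x + y) ^ n - x ^ n = ∑ k ∈ range n, n.choose k * y ^ (n - k) * x ^ k := by
  rw [add_pow, sum_range_succ, Nat.choose_self, Nat.sub_self, pow_zero, Nat.cast_one,
    mul_one, mul_one, add_sub_cancel_right]
  exact sum_congr rfl fun k _ => by ring

lemma altPowSum_insert {a : α} {S : Finset α} (ha : a ∉ S) (μ : α → R) (c : R) (n : ℕ) :
    altPowSum (insert a S) μ c n =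
      -∑ k ∈ range n, n.choose k * μ a ^ (n - k) * altPowSum S μ c k := by
  have hinsert : ∀ T ∈ S.powerset, (-1) ^ #(insert a T) * (c + ∑ j ∈ insert a T, μ j) ^ n
      = -((-1) ^ #T * ((c + ∑ j ∈ T, μ j) + μ a) ^ n) := by
    intro T hT
    have haT : a ∉ T := fun h => ha (mem_powerset.mp hT h)
    rw [card_insert_of_notMem haT, sum_insert haT, pow_succ]
    ring
  rw [altPowSum, sum_powerset_insert ha, sum_congr rfl hinsert, sum_neg_distrib,
    ← sub_eq_add_neg, ← sum_sub_distrib]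
  have hdiff : ∀ T : Finset α, (-1) ^ #T * (c + ∑ j ∈ T, μ j) ^ n
      - (-1) ^ #T * (c + ∑ j ∈ T, μ j + μ a) ^ n
      = -∑ k ∈ range n, (-1) ^ #T * (n.choose k * μ a ^ (n - k) * (c + ∑ j ∈ T, μ j) ^ k) := by
    intro T
    rw [← mul_sub, ← neg_sub, add_pow_sub_pow, mul_neg, mul_sum]
  rw [sum_congr rfl fun T _ => hdiff T, sum_neg_distrib, sum_comm]
  exact congrArg _ <| sum_congr rfl fun k _ => by
    rw [altPowSum, mul_sum]
    exact sum_congr rfl fun T _ => by ring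

lemma altPowSum_eq_zero_of_lt (S : Finset α) (μ : α → R) (c : R) {n : ℕ} (hn : n < #S) :
    altPowSum S μ c n = 0 := by
  induction S using Finset.induction_on generalizing n with
  | empty => simp at hn
  | @insert a S ha ih =>
    rw [card_insert_of_notMem ha] at hn
    rw [altPowSum_insert ha, neg_eq_zero]
    exact sum_eq_zero fun k hk => by
      rw [ih (by rw [mem_range] at hk; omega), mul_zero]

lemma altPowSum_card (S : Finset α) (μ : α → R) (c : R) :
    altPowSum S μ c #S = (-1) ^ #S * (#S).factorial * ∏ j ∈ S, μ j := by
  induction S using Finset.induction_on with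
  | empty => simp [altPowSum]
  | @insert a S ha ih =>
    have hlower : ∑ k ∈ range #S, (#S + 1).choose k * μ a ^ (#S + 1 - k) * altPowSum S μ c k
        = 0 :=
      sum_eq_zero fun k hk => by
        rw [altPowSum_eq_zero_of_lt S μ c (mem_range.mp hk), mul_zero]
    rw [altPowSum_insert ha, card_insert_of_notMem ha, sum_range_succ, hlower, zero_add, ih,
      prod_insert ha, Nat.choose_succ_self_right, Nat.add_sub_cancel_left, Nat.factorial_succ]
    push_cast
    ring

lemma sum_Icc_neg_one_pow_card_mul_sum_pow {K U : Finset α} (hKU : K ⊆ U) (μ : α → R)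
    (n : ℕ) :
    ∑ J ∈ Icc K U, (-1) ^ #J * (∑ j ∈ J, μ j) ^ n
      = (-1) ^ #K * altPowSum (U \ K) μ (∑ j ∈ K, μ j) n := by
  have hdisj : ∀ T ∈ (U \ K).powerset, Disjoint K T := fun T hT =>
    disjoint_of_subset_right (mem_powerset.mp hT) disjoint_sdiff
  rw [Icc_eq_image_powerset hKU, sum_image, altPowSum, mul_sum]
  · refine sum_congr rfl fun T hT => ?_
    rw [card_union_of_disjoint (hdisj T hT), sum_union (hdisj T hT), pow_add, mul_assoc]
  · intro T₁ hT₁ T₂ hT₂ h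
    rw [← union_sdiff_cancel_left (hdisj T₁ hT₁), ← union_sdiff_cancel_left (hdisj T₂ hT₂)]
    exact congrArg (· \ K) h

theorem sum_Icc_neg_one_pow_mul_choose_mul_sum_powersetCard_pow (U : Finset α) (μ : α → R)
    {r : ℕ} (hr : r ≤ #U) :
    ∑ i ∈ Icc (#U - r) #U, (-1 : R) ^ i * i.choose (#U - r) *
        ∑ J ∈ powersetCard i U, (∑ j ∈ J, μ j) ^ r
      = (-1) ^ #U * r.factorial * ∑ J ∈ powersetCard r U, ∏ j ∈ J, μ j := by
  have hcompl : ∀ K ∈ powersetCard (#U - r) U, #(U \ K) = r := fun K hK => by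
    obtain ⟨hKU, hK⟩ := mem_powersetCard.mp hK
    rw [card_sdiff_of_subset hKU, hK, Nat.sub_sub_self hr]
  calc _ = ∑ i ∈ Icc (#U - r) #U, i.choose (#U - r) •
        ∑ J ∈ powersetCard i U, (-1 : R) ^ #J * (∑ j ∈ J, μ j) ^ r := by
        refine sum_congr rfl fun i _ => ?_
        rw [nsmul_eq_mul, mul_comm ((-1 : R) ^ i), mul_assoc, mul_sum]
        exact congrArg _ <| sum_congr rfl fun J hJ => by rw [(mem_powersetCard.mp hJ).2]
    _ = ∑ K ∈ powersetCard (#U - r) U, (-1) ^ #K * altPowSum (U \ K) μ (∑ j ∈ K, μ j) r := by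
        rw [sum_Icc_choose_smul_sum_powersetCard]
        exact sum_congr rfl fun K hK =>
          sum_Icc_neg_one_pow_card_mul_sum_pow (mem_powersetCard.mp hK).1 μ r
    _ = ∑ K ∈ powersetCard (#U - r) U, (-1) ^ #U * r.factorial * ∏ j ∈ U \ K, μ j := by
        refine sum_congr rfl fun K hK => ?_
        rw [← hcompl K hK, altPowSum_card, hcompl K hK, (mem_powersetCard.mp hK).2, ← mul_assoc,
          ← mul_assoc, ← pow_add, Nat.sub_add_cancel hr]
    _ = _ := by rw [← mul_sum, sum_powersetCard_sdiff U hr (fun J => ∏ j ∈ J, μ j)]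

end CommRing

theorem stmt2_general {R : Type*} [CommRing R] (r s : ℕ) (hrs : r ≤ s)
    (μ : Fin s → R) :
    ∑ i ∈ Finset.Icc (s - r) s, (-1 : R) ^ i * (i.choose (s - r)) *
        ∑ J ∈ Finset.powersetCard i (Finset.univ : Finset (Fin s)),
          (∑ j ∈ J, μ j) ^ r
      = (-1 : R) ^ s * (r.factorial : R) *
        ∑ J ∈ Finset.powersetCard r (Finset.univ : Finset (Fin s)),
          ∏ j ∈ J, μ j := by
  simpa using sum_Icc_neg_one_pow_mul_choose_mul_sum_powersetCard_pow univ μ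
    (by simpa using hrs)

theorem stmt2 {R : Type*} [CommRing R] (r s : ℕ) (hr : 1 ≤ r) (hrs : r ≤ s)
    (μ : Fin s → R) :
    ∑ i ∈ Finset.Icc (s - r) s, (-1 : R) ^ i * (i.choose (s - r)) *
        ∑ J ∈ Finset.powersetCard i (Finset.univ : Finset (Fin s)),
          (∑ j ∈ J, μ j) ^ r
      = (-1 : R) ^ s * (r.factorial : R) *
        ∑ J ∈ Finset.powersetCard r (Finset.univ : Finset (Fin s)),
          ∏ j ∈ J, μ j :=
  stmt2_general r s hrs μ
end

section
/- Let $1 \le \ell < r \le s$ be integers and let $\mu_1, \dots, \mu_s$ be elements of a commutative ring. Then $\sum_{i=s-r}^{s} (-1)^i \binom{i}{s-r} \sum_{1 \le j_1 < \cdots < j_i \le s} \left( \sum_{e=1}^{i} \mu_{j_e} \right)^\ell = 0$. -/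
/-!
Since `(#J).choose (s - r)` counts the `(s - r)`-subsets `K ⊆ J`, the sum is a sum over such `K`
of the alternating sums `∑_{K ⊆ J} (-1)^#J (∑_{j ∈ J} μ j)^ℓ`. Writing `J = K ∪ T`, each of these
is an `r`-fold finite difference, with steps `μ j` for `j ∉ K`, of `t ↦ (c + t)^ℓ`; as `ℓ < r`, it
vanishes (each step lowers the degree, via the binomial theorem).
-/

open Finset

namespace Finset

variable {ι R : Type*} [DecidableEq ι] [CommRing R]

theorem sum_powerset_neg_one_pow_card_mul_add_sum_pow_eq_zero (x : ι → R) (a : R)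
    {S : Finset ι} {ℓ : ℕ} (h : ℓ < #S) :
    ∑ T ∈ S.powerset, (-1) ^ #T * (a + ∑ j ∈ T, x j) ^ ℓ = 0 := by
  induction S using Finset.cons_induction generalizing ℓ with
  | empty => simp at h
  | cons u S hu ih =>
    rw [card_cons, Nat.lt_succ_iff] at h
    have hlower : ∀ k < ℓ, ∑ T ∈ S.powerset, (-1) ^ #T * (a + ∑ j ∈ T, x j) ^ k = 0 :=
      fun k hk => ih (hk.trans_le h)
    have hbinom : ∀ c : R, (c + x u) ^ ℓ
        = c ^ ℓ + ∑ k ∈ range ℓ, c ^ k * (x u ^ (ℓ - k) * ℓ.choose k) := fun c => by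
      rw [add_pow, sum_range_succ, add_comm]
      simp only [Nat.sub_self, pow_zero, Nat.choose_self, Nat.cast_one, mul_one, mul_assoc]
    have hinsert : ∀ T ∈ S.powerset, (-1) ^ #(insert u T) * (a + ∑ j ∈ insert u T, x j) ^ ℓ
        = -((-1) ^ #T * ((a + ∑ j ∈ T, x j) + x u) ^ ℓ) := fun T hT => by
      have huT : u ∉ T := fun huT => hu (mem_powerset.1 hT huT)
      rw [card_insert_of_notMem huT, sum_insert huT]
      ring
    rw [cons_eq_insert, sum_powerset_insert hu, sum_congr rfl hinsert, sum_neg_distrib,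
      add_neg_eq_zero]
    simp only [hbinom, mul_add, sum_add_distrib, left_eq_add, mul_sum]
    rw [sum_comm]
    refine sum_eq_zero fun k hk => ?_
    simp only [← mul_assoc, ← sum_mul, hlower k (mem_range.1 hk), zero_mul]

theorem sum_Icc_neg_one_pow_card_mul_sum_pow_eq_zero (x : ι → R) {K S : Finset ι}
    (hKS : K ⊆ S) {ℓ : ℕ} (h : ℓ < #(S \ K)) :
    ∑ J ∈ Icc K S, (-1) ^ #J * (∑ j ∈ J, x j) ^ ℓ = 0 := by
  have hinj : Set.InjOn (K ∪ ·) (S \ K).powerset := fun T hT T' hT' hTT' => by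
    have hKT : Disjoint K T := disjoint_of_subset_right (mem_powerset.1 hT) disjoint_sdiff
    have hKT' : Disjoint K T' := disjoint_of_subset_right (mem_powerset.1 hT') disjoint_sdiff
    rw [← union_sdiff_cancel_left hKT, ← union_sdiff_cancel_left hKT']
    exact congr_arg (· \ K) hTT'
  rw [Icc_eq_image_powerset hKS, sum_image hinj]
  calc ∑ T ∈ (S \ K).powerset, (-1) ^ #(K ∪ T) * (∑ j ∈ K ∪ T, x j) ^ ℓ
      = ∑ T ∈ (S \ K).powerset,
          (-1) ^ #K * ((-1) ^ #T * ((∑ j ∈ K, x j) + ∑ j ∈ T, x j) ^ ℓ) := by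
        refine sum_congr rfl fun T hT => ?_
        have hdisj : Disjoint K T := disjoint_of_subset_right (mem_powerset.1 hT) disjoint_sdiff
        rw [card_union_of_disjoint hdisj, sum_union hdisj, pow_add, mul_assoc]
    _ = 0 := by
      rw [← mul_sum, sum_powerset_neg_one_pow_card_mul_add_sum_pow_eq_zero x _ h, mul_zero]

theorem sum_powerset_choose_card_smul {M : Type*} [AddCommMonoid M] (S : Finset ι) (m : ℕ)
    (g : Finset ι → M) :
    ∑ J ∈ S.powerset, (#J).choose m • g J = ∑ K ∈ powersetCard m S, ∑ J ∈ Icc K S, g J := by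
  simp_rw [← card_powersetCard, ← sum_const]
  refine sum_comm' fun J K => ?_
  simp only [mem_powerset, mem_powersetCard, mem_Icc]
  exact ⟨fun ⟨hJS, hKJ, hK⟩ => ⟨⟨hKJ, hJS⟩, hKJ.trans hJS, hK⟩,
    fun ⟨⟨hKJ, hJS⟩, _, hK⟩ => ⟨hJS, hKJ, hK⟩⟩

end Finset

theorem stmt3_general {R : Type*} [CommRing R] (ℓ r s : ℕ) (hℓr : ℓ < r)
    (hrs : r ≤ s) (μ : Fin s → R) :
    ∑ i ∈ Finset.Icc (s - r) s, (-1 : R) ^ i * (i.choose (s - r)) *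
        ∑ J ∈ Finset.powersetCard i (Finset.univ : Finset (Fin s)),
          (∑ j ∈ J, μ j) ^ ℓ
      = 0 := by
  have hvanish : ∀ K ∈ powersetCard (s - r) univ,
      ∑ J ∈ Icc K univ, (-1 : R) ^ #J * (∑ j ∈ J, μ j) ^ ℓ = 0 := fun K hK => by
    refine sum_Icc_neg_one_pow_card_mul_sum_pow_eq_zero μ (subset_univ K) ?_
    rw [card_sdiff_of_subset (subset_univ K), card_fin, (mem_powersetCard.1 hK).2]
    omega
  calc _ = ∑ i ∈ range (s + 1), ∑ J ∈ powersetCard i univ,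
          (#J).choose (s - r) • ((-1 : R) ^ #J * (∑ j ∈ J, μ j) ^ ℓ) := by
        refine (sum_subset (fun i hi => ?_) fun i hrange hi => ?_).trans
          (sum_congr rfl fun i _ => ?_)
        · rw [mem_Icc] at hi
          rw [mem_range]
          omega
        · rw [mem_Icc, not_and_or, not_le, not_le] at hi
          rw [mem_range] at hrange
          rw [Nat.choose_eq_zero_of_lt (by omega), Nat.cast_zero, mul_zero, zero_mul]
        · rw [mul_sum]
          refine sum_congr rfl fun J hJ => ?_
          rw [(mem_powersetCard.1 hJ).2, nsmul_eq_mul]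
          ring
    _ = ∑ K ∈ powersetCard (s - r) univ,
          ∑ J ∈ Icc K univ, (-1 : R) ^ #J * (∑ j ∈ J, μ j) ^ ℓ := by
        rw [← sum_powerset_choose_card_smul, sum_powerset, card_fin]
    _ = 0 := sum_eq_zero hvanish

theorem stmt3 {R : Type*} [CommRing R] (ℓ r s : ℕ) (hℓ : 1 ≤ ℓ) (hℓr : ℓ < r)
    (hrs : r ≤ s) (μ : Fin s → R) :
    ∑ i ∈ Finset.Icc (s - r) s, (-1 : R) ^ i * (i.choose (s - r)) *
        ∑ J ∈ Finset.powersetCard i (Finset.univ : Finset (Fin s)),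
          (∑ j ∈ J, μ j) ^ ℓ
      = 0 :=
  stmt3_general ℓ r s hℓr hrs μ
end

section
/- Let $r \ge 1$ be an integer and let $\mu_1, \dots, \mu_r$ be positive integers. Then $1 + \sum_{i=0}^{r} (-1)^{i+r} \sum_{1 \le j_1 < \cdots < j_i \le r} \binom{\sum_{e=1}^{i} \mu_{j_e} - 1}{r} = \mu_1 \mu_2 \cdots \mu_r$. -/
/-!
For any finite set `s` and any `t` in a binomial ring, the alternating sum
`∑_{J ⊆ s} (-1)^(|J| + |s|) C(t + μ(J), |s|)` is the iterated finite difference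
`∏_{j ∈ s} Δ_{μ_j}` of `x ↦ C(x, |s|)` at `t`, where `Δ_m f (x) = f (x + m) - f x`.
Since `Δ_m C(·, k + 1) = ∑_{u < m} C(· + u, k)`, induction on `s` shows it equals `∏_{j ∈ s} μ_j`.
Taking `t = -1`, the nonempty `J` give the terms `C(μ(J) - 1, r)` of the theorem, and the empty
set gives `(-1)^r C(-1, r) = 1`.
-/

open Finset

theorem Ring.choose_add_natCast_succ_sub {R : Type*} [NonAssocRing R] [Pow R ℕ] [NatPowAssoc R]
    [BinomialRing R] (x : R) (n k : ℕ) :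
    Ring.choose (x + n) (k + 1) - Ring.choose x (k + 1)
      = ∑ u ∈ range n, Ring.choose (x + u) k := by
  induction n with
  | zero => simp
  | succ n ih =>
    rw [sum_range_succ, ← ih, Nat.cast_succ, ← add_assoc, Ring.choose_succ_succ]
    abel

theorem Ring.choose_neg_one_add_natCast {m : ℕ} (hm : 1 ≤ m) (k : ℕ) :
    Ring.choose (-1 + (m : ℤ)) k = ((m - 1).choose k : ℤ) := by
  rw [← Ring.choose_natCast, Nat.cast_sub hm, Nat.cast_one, neg_add_eq_sub]

theorem Int.ringChoose_neg_one (n : ℕ) : Ring.choose (-1 : ℤ) n = (-1) ^ n := by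
  simpa [Int.negOnePow_def, Ring.choose_natCast, Units.smul_def] using Ring.choose_neg (1 : ℤ) n

theorem Finset.sum_range_mul_sum_powersetCard {ι R : Type*} [NonUnitalNonAssocSemiring R]
    (s : Finset ι) (f : ℕ → R) (g : Finset ι → R) :
    ∑ i ∈ range (#s + 1), f i * ∑ J ∈ powersetCard i s, g J
      = ∑ J ∈ s.powerset, f #J * g J := by
  rw [sum_powerset]
  refine sum_congr rfl fun i _ => ?_
  rw [mul_sum]
  exact sum_congr rfl fun J hJ => by rw [(mem_powersetCard.mp hJ).2]

section PowersetInduction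

variable {ι R : Type*} [DecidableEq ι]

theorem Finset.sum_powerset_insert_neg_one_pow_mul [Ring R] {s : Finset ι} {a : ι} (ha : a ∉ s)
    (f : Finset ι → R) :
    ∑ J ∈ (insert a s).powerset, (-1) ^ (#J + #(insert a s)) * f J
      = ∑ J ∈ s.powerset, (-1) ^ (#J + #s) * (f (insert a J) - f J) := by
  rw [sum_powerset_insert ha, card_insert_of_notMem ha, ← sum_add_distrib]
  refine sum_congr rfl fun J hJ => ?_
  rw [card_insert_of_notMem fun h => ha (mem_powerset.mp hJ h),
    show #J + 1 + (#s + 1) = #J + #s + 2 by omega, show #J + (#s + 1) = #J + #s + 1 by omega,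
    pow_add, pow_succ]
  noncomm_ring

theorem Finset.sum_powerset_neg_one_pow_mul_choose_add_sum [CommRing R] [BinomialRing R]
    (s : Finset ι) (μ : ι → ℕ) (t : R) :
    ∑ J ∈ s.powerset, (-1) ^ (#J + #s) * Ring.choose (t + ∑ j ∈ J, (μ j : R)) #s
      = ∏ j ∈ s, (μ j : R) := by
  induction s using Finset.induction_on generalizing t with
  | empty => simp
  | @insert a s ha ih =>
    rw [sum_powerset_insert_neg_one_pow_mul ha, card_insert_of_notMem ha, prod_insert ha]
    calc _ = ∑ u ∈ range (μ a), ∑ J ∈ s.powerset,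
          (-1) ^ (#J + #s) * Ring.choose ((t + u) + ∑ j ∈ J, (μ j : R)) #s := by
          rw [sum_comm]
          refine sum_congr rfl fun J hJ => ?_
          rw [sum_insert fun h => ha (mem_powerset.mp hJ h),
            show t + ((μ a : R) + ∑ j ∈ J, (μ j : R)) = t + ∑ j ∈ J, (μ j : R) + μ a by abel,
            Ring.choose_add_natCast_succ_sub, mul_sum]
          exact sum_congr rfl fun u _ => by rw [add_right_comm]
      _ = _ := by simp [ih, nsmul_eq_mul]

end PowersetInduction

theorem stmt5 (r : ℕ) (hr : 1 ≤ r) (μ : Fin r → ℕ) (hμ : ∀ j, 1 ≤ μ j) :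
    1 + ∑ i ∈ Finset.range (r + 1), (-1 : ℤ) ^ (i + r) *
        ∑ J ∈ Finset.powersetCard i (Finset.univ : Finset (Fin r)),
          (((∑ j ∈ J, μ j) - 1).choose r : ℤ)
      = ∏ j, (μ j : ℤ) := by
  have key := sum_powerset_neg_one_pow_mul_choose_add_sum univ μ (-1 : ℤ)
  have hgroup := sum_range_mul_sum_powersetCard (univ : Finset (Fin r)) (fun i => (-1 : ℤ) ^ (i + r))
    fun J => (((∑ j ∈ J, μ j) - 1).choose r : ℤ)
  simp only [card_univ, Fintype.card_fin] at key hgroup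
  rw [← key, hgroup, ← add_sum_erase _ _ (empty_mem_powerset _),
    ← add_sum_erase _ _ (empty_mem_powerset _), ← add_assoc]
  congr 1
  -- at `J = ∅` the truncated `0 - 1 = 0` kills the natural binomial, while `C(-1, r) = (-1)^r`
  · simp [Int.ringChoose_neg_one, Nat.choose_eq_zero_of_lt hr, ← pow_add]
  · refine sum_congr rfl fun J hJ => ?_
    obtain ⟨a, ha⟩ := nonempty_iff_ne_empty.mpr (ne_of_mem_erase hJ)
    have hpos : 1 ≤ ∑ j ∈ J, μ j := (hμ a).trans (single_le_sum (fun _ _ => Nat.zero_le _) ha)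
    rw [← Nat.cast_sum, Ring.choose_neg_one_add_natCast hpos]
end

section
/- Let $1 \le r < s$ be integers, let $\mu_1, \dots, \mu_s$ be positive integers, and define $m_i = \sum_{1 \le j_1 < \cdots < j_i \le s} \binom{\sum_{e=1}^i \mu_{j_e} - 1}{r}$ for each $0 \le i \le s$. Then $\sum_{i=s-r}^{s} (-1)^{s+i} \binom{i}{s-r} m_i = e_r(\mu_1,\dots,\mu_s)$, and in particular this quantity is a nonnegative integer. -/
/-! Writing `(#J).choose (s - r)` as the number of `K ⊆ J` with `#K = s - r` and exchanging the
sums turns the left side into a sum over such `K` of alternating sums over the supersets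
`J = K ∪ L`. Since `μ(K) ≥ 1`, the summand is `C(y + μ(L), r)` with `y = μ(K) - 1`, and the inner
sum is the iterated finite difference `Δ_{μ_{j_1}} ⋯ Δ_{μ_{j_r}}` (over the `r` indices outside
`K`) of the degree-`r` polynomial `t ↦ C(y + t, r)`, which is `∏_{j ∉ K} μ_j`. Summing over `K`
gives `e_r(μ)`. -/

open Finset

theorem cast_choose_add_sub_cast_choose (n e μ : ℕ) :
    ((n + μ).choose (e + 1) : ℤ) - n.choose (e + 1) = ∑ k ∈ range μ, ((n + k).choose e : ℤ) := by
  induction μ with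
  | zero => simp
  | succ μ ih =>
    rw [sum_range_succ, ← ih, ← add_assoc, Nat.choose_succ_succ' (n + μ) e]
    push_cast
    ring

section SubsetSums

variable {ι : Type*} [DecidableEq ι]

theorem sum_powerset_choose_card_nsmul {M : Type*} [AddCommMonoid M] (S : Finset ι) (k : ℕ)
    (f : Finset ι → M) :
    ∑ J ∈ S.powerset, (#J).choose k • f J = ∑ K ∈ S.powersetCard k, ∑ J ∈ Icc K S, f J := by
  simp_rw [← card_powersetCard, ← sum_const]
  refine sum_comm' fun J K => ?_
  simp only [mem_powerset, mem_powersetCard, mem_Icc]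
  exact ⟨fun ⟨hJS, hKJ, hK⟩ => ⟨⟨hKJ, hJS⟩, hKJ.trans hJS, hK⟩,
    fun ⟨⟨hKJ, hJS⟩, _, hK⟩ => ⟨hJS, hKJ, hK⟩⟩

theorem sum_Icc_eq_sum_powerset_sdiff {M : Type*} [AddCommMonoid M] {K S : Finset ι} (h : K ⊆ S)
    (f : Finset ι → M) :
    ∑ J ∈ Icc K S, f J = ∑ L ∈ (S \ K).powerset, f (K ∪ L) := by
  rw [Icc_eq_image_powerset h, sum_image]
  intro L₁ hL₁ L₂ hL₂ hL
  have h₁ : Disjoint K L₁ := disjoint_of_subset_right (mem_powerset.1 hL₁) disjoint_sdiff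
  have h₂ : Disjoint K L₂ := disjoint_of_subset_right (mem_powerset.1 hL₂) disjoint_sdiff
  rw [← union_sdiff_cancel_left h₁, ← union_sdiff_cancel_left h₂]
  exact congrArg (· \ K) hL

theorem sum_powersetCard_card_sub_sdiff {M : Type*} [AddCommMonoid M] (S : Finset ι) {k : ℕ}
    (hk : k ≤ #S) (f : Finset ι → M) :
    ∑ K ∈ S.powersetCard (#S - k), f (S \ K) = ∑ J ∈ S.powersetCard k, f J := by
  refine sum_nbij' (S \ ·) (S \ ·) ?_ ?_ ?_ ?_ fun _ _ => rfl
  · intro K hK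
    obtain ⟨hKS, hK⟩ := mem_powersetCard.1 hK
    exact mem_powersetCard.2 ⟨sdiff_subset, by rw [card_sdiff_of_subset hKS]; omega⟩
  · intro J hJ
    obtain ⟨hJS, hJ⟩ := mem_powersetCard.1 hJ
    exact mem_powersetCard.2 ⟨sdiff_subset, by rw [card_sdiff_of_subset hJS, hJ]⟩
  · intro K hK
    exact Finset.sdiff_sdiff_eq_self (mem_powersetCard.1 hK).1
  · intro J hJ
    exact Finset.sdiff_sdiff_eq_self (mem_powersetCard.1 hJ).1

variable (μ : ι → ℕ)

theorem sum_powerset_neg_one_pow_mul_choose_add_sum (S : Finset ι) (y d : ℕ) (hd : d ≤ #S) :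
    ∑ L ∈ S.powerset, (-1 : ℤ) ^ (#S + #L) * ((y + ∑ j ∈ L, μ j).choose d : ℤ)
      = if d = #S then ∏ j ∈ S, (μ j : ℤ) else 0 := by
  induction S using Finset.induction_on generalizing y d with
  | empty => simp_all
  | insert a T ha ih =>
    have hdiff : ∑ L ∈ (insert a T).powerset,
          (-1 : ℤ) ^ (#(insert a T) + #L) * ((y + ∑ j ∈ L, μ j).choose d : ℤ)
        = ∑ L ∈ T.powerset, (-1 : ℤ) ^ (#T + #L) *
            (((y + ∑ j ∈ L, μ j + μ a).choose d : ℤ) - (y + ∑ j ∈ L, μ j).choose d) := by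
      rw [sum_powerset_insert ha, card_insert_of_notMem ha, ← sum_add_distrib]
      refine sum_congr rfl fun L hL => ?_
      have haL : a ∉ L := fun h => ha (mem_powerset.1 hL h)
      rw [card_insert_of_notMem haL, sum_insert haL]
      ring_nf
    rw [hdiff, card_insert_of_notMem ha]
    rw [card_insert_of_notMem ha] at hd
    cases d with
    | zero => simp
    | succ e =>
      simp_rw [cast_choose_add_sub_cast_choose, mul_sum]
      rw [sum_comm]
      have hinner : ∀ k ∈ range (μ a), ∑ L ∈ T.powerset,
          (-1 : ℤ) ^ (#T + #L) * ((y + ∑ j ∈ L, μ j + k).choose e : ℤ)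
            = if e = #T then ∏ j ∈ T, (μ j : ℤ) else 0 := fun k _ => by
        rw [← ih (y + k) e (by omega)]
        refine sum_congr rfl fun L _ => ?_
        rw [add_right_comm]
      rw [sum_congr rfl hinner, sum_const, card_range, prod_insert ha]
      split_ifs <;> simp_all

theorem sum_powerset_alternating_choose_card_mul_choose_eq_esymm (S : Finset ι) {r : ℕ}
    (hrS : r < #S) (hμ : ∀ j ∈ S, 1 ≤ μ j) :
    ∑ J ∈ S.powerset,
        (-1 : ℤ) ^ (#S + #J) * (#J).choose (#S - r) * ((∑ j ∈ J, μ j) - 1).choose r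
      = ∑ J ∈ S.powersetCard r, ∏ j ∈ J, (μ j : ℤ) := by
  calc _ = ∑ J ∈ S.powerset, (#J).choose (#S - r) •
          ((-1 : ℤ) ^ (#S + #J) * ((∑ j ∈ J, μ j) - 1).choose r) :=
        sum_congr rfl fun J _ => by rw [nsmul_eq_mul]; ring
    _ = ∑ K ∈ S.powersetCard (#S - r), ∑ J ∈ Icc K S,
          (-1 : ℤ) ^ (#S + #J) * ((∑ j ∈ J, μ j) - 1).choose r :=
        sum_powerset_choose_card_nsmul S _ _
    _ = ∑ K ∈ S.powersetCard (#S - r), ∏ j ∈ S \ K, (μ j : ℤ) := by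
        refine sum_congr rfl fun K hK => ?_
        obtain ⟨hKS, hK⟩ := mem_powersetCard.1 hK
        have hcompl : #(S \ K) = r := by rw [card_sdiff_of_subset hKS]; omega
        obtain ⟨i, hi⟩ : K.Nonempty := card_pos.1 (by omega)
        have hμK : 1 ≤ ∑ j ∈ K, μ j :=
          (hμ i (hKS hi)).trans (single_le_sum (fun _ _ => Nat.zero_le _) hi)
        rw [sum_Icc_eq_sum_powerset_sdiff hKS, ← (sum_powerset_neg_one_pow_mul_choose_add_sum μ
          (S \ K) (∑ j ∈ K, μ j - 1) r hcompl.ge).trans (if_pos hcompl.symm)]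
        refine sum_congr rfl fun L hL => ?_
        have hKL : Disjoint K L := disjoint_of_subset_right (mem_powerset.1 hL) disjoint_sdiff
        rw [card_union_of_disjoint hKL, sum_union hKL, hcompl, hK,
          show ∑ j ∈ K, μ j + ∑ j ∈ L, μ j - 1 = ∑ j ∈ K, μ j - 1 + ∑ j ∈ L, μ j by omega,
          show #S + (#S - r + #L) = r + #L + 2 * (#S - r) by omega, pow_add _ (r + #L),
          pow_mul, neg_one_sq, one_pow, mul_one]
    _ = _ := sum_powersetCard_card_sub_sdiff S hrS.le fun J => ∏ j ∈ J, (μ j : ℤ)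

end SubsetSums

theorem stmt9_general (r s : ℕ) (hrs : r < s) (μ : Fin s → ℕ)
    (hμ : ∀ j, 1 ≤ μ j)
    (m : ℕ → ℤ)
    (hm : ∀ i, m i = ∑ J ∈ Finset.powersetCard i (Finset.univ : Finset (Fin s)),
      (((∑ j ∈ J, μ j) - 1).choose r : ℤ)) :
    ∑ i ∈ Finset.Icc (s - r) s, (-1 : ℤ) ^ (s + i) * (i.choose (s - r)) * m i
        = ∑ J ∈ Finset.powersetCard r (Finset.univ : Finset (Fin s)),
            ∏ j ∈ J, (μ j : ℤ) ∧
      0 ≤ ∑ i ∈ Finset.Icc (s - r) s, (-1 : ℤ) ^ (s + i) * (i.choose (s - r)) * m i := by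
  have hcard : #(univ : Finset (Fin s)) = s := card_fin s
  have key : ∑ i ∈ Icc (s - r) s, (-1 : ℤ) ^ (s + i) * (i.choose (s - r)) * m i
      = ∑ J ∈ powersetCard r univ, ∏ j ∈ J, (μ j : ℤ) := by
    rw [← sum_powerset_alternating_choose_card_mul_choose_eq_esymm μ univ (by rwa [hcard])
      fun j _ => hμ j, sum_powerset, hcard]
    have hIcc : Icc (s - r) s ⊆ range (s + 1) := fun i hi => by
      simp only [mem_Icc, mem_range] at hi ⊢
      omega
    calc _ = ∑ i ∈ range (s + 1), (-1 : ℤ) ^ (s + i) * (i.choose (s - r)) * m i :=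
          sum_subset hIcc fun i hs hi => by
            simp only [mem_range, mem_Icc] at hs hi
            rw [Nat.choose_eq_zero_of_lt (by omega), Nat.cast_zero, mul_zero, zero_mul]
      _ = _ := sum_congr rfl fun i _ => by
          rw [hm, mul_sum]
          refine sum_congr rfl fun J hJ => ?_
          rw [(mem_powersetCard.1 hJ).2]
  exact ⟨key, key ▸ sum_nonneg fun J _ => prod_nonneg fun j _ => Int.natCast_nonneg _⟩

theorem stmt9 (r s : ℕ) (hr : 1 ≤ r) (hrs : r < s) (μ : Fin s → ℕ)
    (hμ : ∀ j, 1 ≤ μ j)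
    (m : ℕ → ℤ)
    (hm : ∀ i, m i = ∑ J ∈ Finset.powersetCard i (Finset.univ : Finset (Fin s)),
      (((∑ j ∈ J, μ j) - 1).choose r : ℤ)) :
    ∑ i ∈ Finset.Icc (s - r) s, (-1 : ℤ) ^ (s + i) * (i.choose (s - r)) * m i
        = ∑ J ∈ Finset.powersetCard r (Finset.univ : Finset (Fin s)),
            ∏ j ∈ J, (μ j : ℤ) ∧
      0 ≤ ∑ i ∈ Finset.Icc (s - r) s, (-1 : ℤ) ^ (s + i) * (i.choose (s - r)) * m i :=
  stmt9_general r s hrs μ hμ m hm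
end

section
/- Let $r \ge 1$ and let $P(T) = 1 + \sum_{i=0}^{r} (-1)^{r+i} m_i T^i \in \mathbb{Z}[T]$ where $m_i = \sum_{1 \le j_1 < \cdots < j_i \le r} \binom{\sum_{e=1}^i \mu_{j_e} - 1}{r}$ for positive integers $\mu_1, \dots, \mu_r$. Then $P(1) = \mu_1 \mu_2 \cdots \mu_r$. -/
/-!
Expand `Q = ∏ⱼ ((1 + X) ^ μⱼ - 1)` over subsets `J`: its `i`-th coefficient is
`∑_J (-1) ^ (r + |J|) * C(s_J, i)` with `s_J = ∑_{j ∈ J} μⱼ`. Each factor is `X` times a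
polynomial with constant term `μⱼ`, so `Q = X ^ r * H` with `H(0) = ∏ μⱼ`; hence the truncated
alternating sum `∑_{i ≤ r} (-1) ^ (r + i) * coeff_i Q` is `∏ μⱼ`. Exchanging the sums and using
`∑_{i ≤ r} (-1) ^ (r + i) * C(s, i) = C(s - 1, r)` for `s ≥ 1` turns it into the sum defining
`P(1) - 1`, the extra `1` coming from `J = ∅`, where `s_J = 0`.
-/

open Polynomial Finset

namespace Finset

lemma prod_pow_sub_one_eq_sum_powerset {R ι : Type*} [CommRing R] [DecidableEq ι]
    (S : Finset ι) (a : R) (μ : ι → ℕ) :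
    ∏ j ∈ S, (a ^ μ j - 1) = ∑ J ∈ S.powerset, (-1) ^ (#S + #J) * a ^ ∑ j ∈ J, μ j := by
  calc ∏ j ∈ S, (a ^ μ j - 1) = ∏ j ∈ S, -(1 - a ^ μ j) := by simp_rw [neg_sub]
    _ = (-1) ^ #S * ∏ j ∈ S, (1 - a ^ μ j) := prod_neg _
    _ = _ := by
      simp [prod_sub, prod_pow_eq_pow_sum, mul_sum, pow_add, mul_assoc]

end Finset

namespace Polynomial

lemma coeff_prod_one_add_X_pow_sub_one {R ι : Type*} [CommRing R] [DecidableEq ι]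
    (S : Finset ι) (μ : ι → ℕ) (i : ℕ) :
    (∏ j ∈ S, ((1 + X : R[X]) ^ μ j - 1)).coeff i
      = ∑ J ∈ S.powerset, (-1) ^ (#S + #J) * ((∑ j ∈ J, μ j).choose i : R) := by
  rw [prod_pow_sub_one_eq_sum_powerset, finsetSum_coeff]
  refine sum_congr rfl fun J _ ↦ ?_
  rw [show (-1 : R[X]) ^ (#S + #J) = C ((-1) ^ (#S + #J)) by simp, coeff_C_mul,
    coeff_one_add_X_pow]

lemma prod_one_add_X_pow_sub_one_eq_X_pow_mul {R ι : Type*} [CommRing R]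
    (S : Finset ι) (μ : ι → ℕ) :
    ∏ j ∈ S, ((1 + X : R[X]) ^ μ j - 1)
      = X ^ #S * ∏ j ∈ S, ∑ k ∈ range (μ j), (1 + X : R[X]) ^ k := by
  simp only [← mul_geom_sum, add_sub_cancel_left, prod_mul_distrib, prod_const]

lemma sum_range_mul_coeff_X_pow_mul {R : Type*} [Semiring R] (w : ℕ → R) (n : ℕ) (p : R[X]) :
    ∑ i ∈ range (n + 1), w i * (X ^ n * p).coeff i = w n * p.coeff 0 := by
  rw [sum_range_succ, sum_eq_zero fun i hi ↦ ?_, zero_add]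
  · rw [coeff_X_pow_mul', if_pos le_rfl, Nat.sub_self]
  · simp [coeff_X_pow_mul', (mem_range.mp hi).not_ge]

end Polynomial

-- The correction term at `s = 0` accounts for the truncated subtraction `0 - 1 = 0`.
lemma sum_range_neg_one_pow_mul_choose (s : ℕ) {r : ℕ} (hr : 1 ≤ r) :
    ∑ i ∈ range (r + 1), (-1 : ℤ) ^ (r + i) * (s.choose i : ℤ)
      = ((s - 1).choose r : ℤ) + if s = 0 then (-1) ^ r else 0 := by
  simp only [pow_add, mul_assoc, ← mul_sum]
  rcases s with _ | s
  · simp [sum_range_succ', Nat.choose_eq_zero_of_lt hr]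
  · rw [Int.alternating_sum_range_choose_eq_choose, ← mul_assoc, ← pow_add,
      Even.neg_one_pow ⟨r, rfl⟩]
    simp

theorem one_add_sum_powerset_neg_one_pow_mul_choose_sum_sub_one {ι : Type*} [DecidableEq ι]
    (S : Finset ι) (hS : S.Nonempty) (μ : ι → ℕ) (hμ : ∀ j ∈ S, 1 ≤ μ j) :
    1 + ∑ J ∈ S.powerset, (-1 : ℤ) ^ (#S + #J) * ((∑ j ∈ J, μ j) - 1).choose #S
      = ∏ j ∈ S, (μ j : ℤ) := by
  have sum_eq_zero_iff_eq_empty : ∀ J ∈ S.powerset, ∑ j ∈ J, μ j = 0 ↔ J = ∅ := fun J hJ ↦ by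
    simp only [sum_eq_zero_iff, eq_empty_iff_forall_notMem]
    refine forall_congr' fun j ↦ ⟨fun h hj ↦ ?_, fun h hj ↦ absurd hj h⟩
    have := hμ j (mem_powerset.1 hJ hj)
    have := h hj
    omega
  have empty_term : ∑ J ∈ S.powerset,
      (-1 : ℤ) ^ (#S + #J) * (if ∑ j ∈ J, μ j = 0 then (-1) ^ #S else 0) = 1 := by
    rw [sum_eq_single_of_mem ∅ (empty_mem_powerset S) fun J hJ hJ' ↦ by
      simp [(sum_eq_zero_iff_eq_empty J hJ).not.2 hJ']]
    simp [← pow_add, Even.neg_one_pow ⟨#S, rfl⟩]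
  calc 1 + ∑ J ∈ S.powerset, (-1 : ℤ) ^ (#S + #J) * ((∑ j ∈ J, μ j) - 1).choose #S
      = ∑ J ∈ S.powerset, (-1) ^ (#S + #J) *
          ∑ i ∈ range (#S + 1), (-1) ^ (#S + i) * ((∑ j ∈ J, μ j).choose i : ℤ) := by
        simp only [sum_range_neg_one_pow_mul_choose _ hS.card_pos, mul_add, sum_add_distrib]
        rw [add_comm, empty_term]
    _ = ∑ i ∈ range (#S + 1), (-1) ^ (#S + i) * (∏ j ∈ S, ((1 + X : ℤ[X]) ^ μ j - 1)).coeff i := by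
        simp only [coeff_prod_one_add_X_pow_sub_one, mul_sum]
        rw [sum_comm]
        simp only [mul_left_comm]
    _ = ∏ j ∈ S, (μ j : ℤ) := by
        rw [prod_one_add_X_pow_sub_one_eq_X_pow_mul, sum_range_mul_coeff_X_pow_mul,
          Even.neg_one_pow ⟨_, rfl⟩, one_mul, coeff_zero_eq_eval_zero, eval_prod]
        simp [eval_finsetSum]

open Polynomial in
theorem stmt12 (r : ℕ) (hr : 1 ≤ r) (μ : Fin r → ℕ) (hμ : ∀ j, 1 ≤ μ j)
    (m : ℕ → ℤ)
    (hm : ∀ i, m i = ∑ J ∈ Finset.powersetCard i (Finset.univ : Finset (Fin r)),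
      (((∑ j ∈ J, μ j) - 1).choose r : ℤ))
    (P : ℤ[X])
    (hP : P = 1 + ∑ i ∈ Finset.range (r + 1),
      Polynomial.C ((-1 : ℤ) ^ (r + i) * m i) * X ^ i) :
    P.eval 1 = ∏ j, (μ j : ℤ) := by
  have eval_P : P.eval 1 = 1 + ∑ i ∈ range (r + 1), (-1 : ℤ) ^ (r + i) * m i := by
    simp [hP, eval_finsetSum]
  have sum_eq_sum_powerset : ∑ i ∈ range (r + 1), (-1 : ℤ) ^ (r + i) * m i
      = ∑ J ∈ (univ : Finset (Fin r)).powerset,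
          (-1 : ℤ) ^ (#(univ : Finset (Fin r)) + #J) * ((∑ j ∈ J, μ j) - 1).choose r := by
    rw [sum_powerset, card_fin]
    refine sum_congr rfl fun i _ ↦ ?_
    rw [hm, mul_sum]
    exact sum_congr rfl fun J hJ ↦ by rw [(mem_powersetCard.1 hJ).2]
  have univ_nonempty : (univ : Finset (Fin r)).Nonempty := univ_nonempty_iff.2 ⟨⟨0, hr⟩⟩
  rw [eval_P, sum_eq_sum_powerset]
  simpa only [card_fin] using
    one_add_sum_powerset_neg_one_pow_mul_choose_sum_sub_one univ univ_nonempty μ fun j _ ↦ hμ j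
end

section
/- Let $1 \le r \le s$ be integers and let $\mu_1, \dots, \mu_s$ be positive integers. Define $m_i = \sum_{|J| = i, J \subseteq \{1,\dots,s\}} \binom{(\sum_{j \in J} \mu_j) - 1}{r}$. Then the polynomial $F(T) = 1 + (-1)^r \sum_{i=0}^s (-1)^i m_i T^i \in \mathbb{Q}[T]$ satisfies: the value of $\frac{(-1)^{s-r}}{(s-r)!} F^{(s-r)}(1)$ equals $e_r(\mu_1,\dots,\mu_s)$ when $s > r$, where $F^{(s-r)}$ denotes the $(s-r)$-th derivative. -/
/-!
Write `k = s - r`. Since `(-1)^k/k! · F^(k)(1)` is `(-1)^k` times the value at `1` of the `k`-th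
Hasse derivative, it equals `∑_J (-1)^{|Jᶜ|} C(|J|, k) C(μ_J - 1, r)` over all `J ⊆ {1, …, s}`.
Writing `C(|J|, k)` as the number of `k`-subsets `K ⊆ J` and summing over `K` first, the inner sum
over `J ⊇ K` is a mixed `r`-th finite difference, with steps `μ_j` for `j ∉ K`, of the degree-`r`
polynomial `x ↦ C(μ_K - 1 + x, r)`; it equals `∏_{j ∉ K} μ_j`. Summing over `K` gives `e_r(μ)`.
The finite difference is computed with generating functions:
`∑_{V ⊆ T} (-1)^{|T \ V|} (1 + X)^{c + μ_V} = (1 + X)^c ∏_{j ∈ T} ((1 + X)^{μ_j} - 1)`,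
and every factor `(1 + X)^{μ_j} - 1` is `X` times a polynomial with constant term `μ_j`.
-/

open Polynomial Finset

theorem eval_iterate_derivative_eq_factorial_mul {R : Type*} [Semiring R] (k : ℕ) (p : R[X])
    (x : R) : (derivative^[k] p).eval x = k.factorial * (hasseDeriv k p).eval x := by
  rw [← factorial_smul_hasseDeriv, LinearMap.smul_apply, eval_smul, nsmul_eq_mul]

theorem eval_one_hasseDeriv_sum_C_mul_X_pow {R : Type*} [CommSemiring R] (a : ℕ → R)
    (N k : ℕ) :
    (hasseDeriv k (∑ i ∈ range N, C (a i) * X ^ i)).eval 1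
      = ∑ i ∈ range N, (i.choose k : R) * a i := by
  simp [C_mul_X_pow_eq_monomial, hasseDeriv_monomial, eval_finsetSum]

theorem one_add_X_pow_sub_one {R : Type*} [CommRing R] (n : ℕ) :
    (1 + X : R[X]) ^ n - 1 = X * ∑ i ∈ range n, (1 + X) ^ i := by
  rw [← geom_sum_mul, add_sub_cancel_left, mul_comm]

theorem sum_powerset_neg_one_pow_mul_choose {ι R : Type*} [DecidableEq ι] [CommRing R]
    (T : Finset ι) (μ : ι → ℕ) (c : ℕ) :
    ∑ V ∈ T.powerset, (-1 : R) ^ #(T \ V) * ((c + ∑ j ∈ V, μ j).choose #T : R)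
      = ∏ j ∈ T, (μ j : R) := by
  have hgen : ∑ V ∈ T.powerset, C ((-1 : R) ^ #(T \ V)) * (1 + X) ^ (c + ∑ j ∈ V, μ j)
      = (1 + X) ^ c * (∏ j ∈ T, ∑ i ∈ range (μ j), (1 + X : R[X]) ^ i) * X ^ #T := by
    have hprod := prod_add (fun j ↦ (1 + X : R[X]) ^ μ j) (fun _ ↦ -1) T
    simp only [← sub_eq_add_neg, one_add_X_pow_sub_one, prod_mul_distrib, prod_const,
      prod_pow_eq_pow_sum] at hprod
    rw [mul_assoc, mul_comm _ (X ^ _), hprod, mul_sum]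
    refine sum_congr rfl fun V _ ↦ ?_
    simp only [map_pow, map_neg, map_one, pow_add]
    ring
  have hcoeff := congrArg (coeff · #T) hgen
  simp only [finsetSum_coeff, coeff_C_mul, coeff_one_add_X_pow] at hcoeff
  rw [hcoeff, coeff_mul_X_pow', if_pos le_rfl, Nat.sub_self, coeff_zero_eq_eval_zero]
  simp [eval_prod, eval_finsetSum]

section Fintype

variable {ι R : Type*} [Fintype ι] [DecidableEq ι] [CommRing R]

theorem neg_one_pow_card_add_card (J : Finset ι) :
    (-1 : R) ^ (Fintype.card ι + #J) = (-1) ^ #Jᶜ := by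
  rw [← card_compl_add_card J, add_assoc, pow_add, ← two_mul, pow_mul, neg_one_sq, one_pow,
    mul_one]

theorem sum_Icc_neg_one_pow_card_compl_mul_choose (μ : ι → ℕ) (K : Finset ι)
    (hK : 1 ≤ ∑ j ∈ K, μ j) :
    ∑ J ∈ Icc K univ, (-1 : R) ^ #Jᶜ * ((∑ j ∈ J, μ j - 1).choose #Kᶜ : R)
      = ∏ j ∈ Kᶜ, (μ j : R) := by
  have hdisj (V : Finset ι) (hV : V ∈ Kᶜ.powerset) : Disjoint K V :=
    disjoint_compl_right.mono_right (mem_powerset.1 hV)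
  rw [← sum_powerset_neg_one_pow_mul_choose Kᶜ μ (∑ j ∈ K, μ j - 1),
    Icc_eq_image_powerset (subset_univ K), ← compl_eq_univ_sdiff,
    sum_image fun V hV W hW h ↦ by
      rw [← union_sdiff_cancel_left (hdisj V hV), h, union_sdiff_cancel_left (hdisj W hW)]]
  refine sum_congr rfl fun V hV ↦ ?_
  rw [compl_union, ← sdiff_eq_inter_compl, sum_union (hdisj V hV), Nat.sub_add_comm hK]

theorem sum_powersetCard_compl {M : Type*} [AddCommMonoid M] {k r : ℕ}
    (hcard : Fintype.card ι = r + k) (f : Finset ι → M) :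
    ∑ K ∈ powersetCard k univ, f Kᶜ = ∑ U ∈ powersetCard r univ, f U := by
  refine sum_nbij' compl compl (fun K hK ↦ ?_) (fun U hU ↦ ?_) (fun K _ ↦ compl_compl K)
    (fun U _ ↦ compl_compl U) fun K _ ↦ rfl <;>
  · simp only [mem_powersetCard_univ, card_compl] at *
    omega

theorem sum_neg_one_pow_card_compl_mul_choose {r k : ℕ} (hcard : Fintype.card ι = r + k)
    (hk : 0 < k) (μ : ι → ℕ) (hμ : ∀ j, 1 ≤ μ j) :
    ∑ J : Finset ι, (-1 : R) ^ #Jᶜ * ((#J).choose k : R) * ((∑ j ∈ J, μ j - 1).choose r : R)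
      = ∑ U ∈ powersetCard r univ, ∏ j ∈ U, (μ j : R) := by
  calc _ = ∑ K ∈ powersetCard k univ, ∑ J ∈ Icc K univ,
        (-1 : R) ^ #Jᶜ * ((∑ j ∈ J, μ j - 1).choose r : R) := by
        rw [← sum_comm' (s := univ) (t := (powersetCard k ·)) fun J K ↦ by simp [and_comm]]
        refine sum_congr rfl fun J _ ↦ ?_
        rw [sum_const, card_powersetCard, nsmul_eq_mul]
        ring
    _ = ∑ K ∈ powersetCard k univ, ∏ j ∈ Kᶜ, (μ j : R) := by
        refine sum_congr rfl fun K hK ↦ ?_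
        have hKc : #Kᶜ = r := by
          rw [card_compl, mem_powersetCard_univ.1 hK]
          omega
        obtain ⟨j, hj⟩ : K.Nonempty := by
          rw [← card_pos, mem_powersetCard_univ.1 hK]
          exact hk
        rw [← hKc, sum_Icc_neg_one_pow_card_compl_mul_choose]
        exact (hμ j).trans (single_le_sum (fun _ _ ↦ Nat.zero_le _) hj)
    _ = _ := sum_powersetCard_compl hcard fun U ↦ ∏ j ∈ U, (μ j : R)

end Fintype

open Polynomial in
theorem stmt16_general (r s : ℕ) (hrs : r < s) (μ : Fin s → ℕ)
    (hμ : ∀ j, 1 ≤ μ j)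
    (m : ℕ → ℕ)
    (hm : ∀ i, m i = ∑ J ∈ Finset.powersetCard i (Finset.univ : Finset (Fin s)),
      (((∑ j ∈ J, μ j) - 1).choose r))
    (F : ℚ[X])
    (hF : F = 1 + (-1 : ℚ[X]) ^ r * ∑ i ∈ Finset.range (s + 1),
      Polynomial.C ((-1 : ℚ) ^ i * (m i : ℚ)) * X ^ i) :
    ((-1 : ℚ) ^ (s - r) / ((s - r).factorial : ℚ)) *
        ((Polynomial.derivative)^[s - r] F).eval 1
      = ∑ J ∈ Finset.powersetCard r (Finset.univ : Finset (Fin s)),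
          ∏ j ∈ J, (μ j : ℚ) := by
  set k := s - r
  have hk : 0 < k := by omega
  calc (-1) ^ k / (k.factorial : ℚ) * (derivative^[k] F).eval 1
      = (-1) ^ k * (hasseDeriv k F).eval 1 := by
        rw [eval_iterate_derivative_eq_factorial_mul]
        field_simp
    _ = ∑ i ∈ range (s + 1), (-1) ^ (s + i) * (i.choose k : ℚ) * m i := by
        rw [hF, map_add, hasseDeriv_apply_one _ hk, zero_add,
          show (-1 : ℚ[X]) ^ r = C ((-1) ^ r) by simp, ← smul_eq_C_mul, map_smul, eval_smul,
          eval_one_hasseDeriv_sum_C_mul_X_pow, smul_eq_mul, mul_sum, mul_sum]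
        refine sum_congr rfl fun i _ ↦ ?_
        rw [show s + i = k + r + i by omega]
        ring
    _ = ∑ J : Finset (Fin s),
          (-1) ^ #Jᶜ * ((#J).choose k : ℚ) * ((∑ j ∈ J, μ j - 1).choose r : ℚ) := by
        simp_rw [hm, Nat.cast_sum, mul_sum]
        rw [← powerset_univ, sum_powerset, card_univ, Fintype.card_fin]
        refine sum_congr rfl fun i _ ↦ sum_congr rfl fun J hJ ↦ ?_
        rw [← (mem_powersetCard.1 hJ).2, ← neg_one_pow_card_add_card, Fintype.card_fin]
    _ = _ :=
        sum_neg_one_pow_card_compl_mul_choose (by simp only [Fintype.card_fin]; omega) hk μ hμ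

open Polynomial in
theorem stmt16 (r s : ℕ) (hr : 1 ≤ r) (hrs : r < s) (μ : Fin s → ℕ)
    (hμ : ∀ j, 1 ≤ μ j)
    (m : ℕ → ℕ)
    (hm : ∀ i, m i = ∑ J ∈ Finset.powersetCard i (Finset.univ : Finset (Fin s)),
      (((∑ j ∈ J, μ j) - 1).choose r))
    (F : ℚ[X])
    (hF : F = 1 + (-1 : ℚ[X]) ^ r * ∑ i ∈ Finset.range (s + 1),
      Polynomial.C ((-1 : ℚ) ^ i * (m i : ℚ)) * X ^ i) :
    ((-1 : ℚ) ^ (s - r) / ((s - r).factorial : ℚ)) *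
        ((Polynomial.derivative)^[s - r] F).eval 1
      = ∑ J ∈ Finset.powersetCard r (Finset.univ : Finset (Fin s)),
          ∏ j ∈ J, (μ j : ℚ) :=
  stmt16_general r s hrs μ hμ m hm F hF
end
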